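/- arXiv:2601.19301 — 2 statements merged into one kernel-verified Lean document; each statement's English description precedes it below -/
import Mathlib

section
/- Let R be a finite commutative local ring of order q^n with q odd, R/J(R) of order q, J(R)^{n-1} ≠ 0, and let k be even with 0 ≤ k < n. Then the squaring map restricted to J^{k/2} \ J^{k/2+1} has image in J^k \ J^{k+1} of size exactly q^{n-k-1}(q-1)/2; i.e., exactly half of the elements of J^k \ J^{k+1} are squares in R. -/
/-!
Write `𝔪` for the maximal ideal. Lifting residues gives an injection `(R/𝔪) × J ↪ I` whenever
`J < I`, so along the strict chain `R = 𝔪⁰ > 𝔪 > ⋯ > 𝔪^(n-1) > 0` each step divides the cardinality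
by at least `q`; as `|R| = q^n`, `|𝔪^i| = q^(n-i)` exactly. Hence every `y ∈ 𝔪^m \ 𝔪^(m+1)`
generates `𝔪^m` (Nakayama), so `y²` generates `𝔪^(2m)`, and counting shows that the annihilator
of `y` is `𝔪^(n-m)`. Since `2` is a unit, `x² = s²` on this layer forces `x ∓ s ∈ 𝔪^(n-m)` for
exactly one sign, so squaring is `2q^m`-to-one on the `q^(n-m-1)(q-1)` elements of the layer.
-/

open IsLocalRing

theorem isUnit_two_of_odd_card {R : Type*} [Ring R] [Fintype R] (h : Odd (Fintype.card R)) :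
    IsUnit (2 : R) := by
  obtain ⟨j, hj⟩ := h
  have hchar := Nat.cast_card_eq_zero R
  rw [hj] at hchar
  push_cast at hchar
  have hleft : (2 : R) * (j + 1) = 1 := by
    calc (2 : R) * (j + 1) = (2 * j + 1) + 1 := by noncomm_ring
      _ = 1 := by rw [hchar, zero_add]
  have hright : ((j : R) + 1) * 2 = 1 := by
    calc ((j : R) + 1) * 2 = (2 * j + 1) + 1 := by noncomm_ring
      _ = 1 := by rw [hchar, zero_add]
  exact ⟨⟨2, j + 1, hleft, hright⟩, rfl⟩

theorem Set.ncard_eq_ncard_image_mul {α β : Type*} {s : Set α} (hs : s.Finite) {f : α → β}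
    {c : ℕ} (hc : ∀ x ∈ s, {y ∈ s | f y = f x}.ncard = c) : s.ncard = (f '' s).ncard * c := by
  classical
  lift s to Finset α using hs
  rw [← Finset.coe_image, Set.ncard_coe_finset, Set.ncard_coe_finset,
    Finset.card_eq_sum_card_image f s, ← smul_eq_mul, ← Finset.sum_const]
  refine Finset.sum_congr rfl fun b hb => ?_
  obtain ⟨x, hx, rfl⟩ := Finset.mem_image.mp hb
  rw [← hc x hx, ← Set.ncard_coe_finset, Finset.coe_filter]
  rfl

theorem AddSubgroup.ncard_setOf_sub_mem_or_add_mem {G : Type*} [AddCommGroup G] [Finite G]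
    (A : AddSubgroup G) {s : G} (hs : s + s ∉ A) :
    {x | x - s ∈ A ∨ x + s ∈ A}.ncard = 2 * Nat.card A := by
  have hdisj : Disjoint {x | x - s ∈ A} {x | x + s ∈ A} :=
    Set.disjoint_left.mpr fun x hsub hadd => hs (by simpa using A.sub_mem hadd hsub)
  have hsub : {x | x - s ∈ A}.ncard = Nat.card A := by
    rw [← Nat.card_coe_set_eq]
    exact Nat.card_congr (Equiv.subtypeEquiv (Equiv.subRight s) fun _ => Iff.rfl)
  have hadd : {x | x + s ∈ A}.ncard = Nat.card A := by
    rw [← Nat.card_coe_set_eq]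
    exact Nat.card_congr (Equiv.subtypeEquiv (Equiv.addRight s) fun _ => Iff.rfl)
  rw [Set.ofPred_or, Set.ncard_union_eq hdisj, hsub, hadd, two_mul]

theorem mul_eq_zero_iff_mem_of_card_mul_card_eq {R : Type*} [CommRing R] [Finite R] {s : R}
    {A : Ideal R} (hA : ∀ a ∈ A, a * s = 0)
    (hcard : Nat.card A * Nat.card (Ideal.span {s}) = Nat.card R) (b : R) :
    b * s = 0 ↔ b ∈ A := by
  let f := LinearMap.toSpanSingleton R R s
  have hker : Nat.card (LinearMap.ker f) * Nat.card (Ideal.span {s}) = Nat.card R := by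
    rw [Submodule.card_eq_card_quotient_mul_card (LinearMap.ker f),
      Nat.card_congr f.quotKerEquivRange.toEquiv, LinearMap.range_toSpanSingleton]
  have hAker : (A : Set R) = LinearMap.ker f := by
    refine Set.eq_of_subset_of_ncard_le (fun a ha => hA a ha) ?_
    rw [← Nat.card_coe_set_eq, ← Nat.card_coe_set_eq]
    exact Nat.le_of_mul_le_mul_right (hker.trans hcard.symm).le Nat.card_pos
  rw [← SetLike.mem_coe, hAker]
  exact Iff.rfl

namespace IsLocalRing

variable {R : Type*} [CommRing R] [IsLocalRing R]

local notation "𝔪" => maximalIdeal R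

variable (R) in
def radicalLayer (i : ℕ) : Set R := ↑(𝔪 ^ i) \ ↑(𝔪 ^ (i + 1))

instance [Finite R] : Finite (ResidueField R) := Finite.of_surjective _ residue_surjective

theorem card_residueField_mul_card_le_of_lt [Finite R] {I J : Ideal R} (hJI : J < I) :
    Nat.card (ResidueField R) * Nat.card J ≤ Nat.card I := by
  obtain ⟨x, hxI, hxJ⟩ := SetLike.exists_of_lt hJI
  obtain ⟨lift, hlift⟩ : ∃ g : ResidueField R → R, ∀ a, residue R (g a) = a :=
    ⟨_, Function.surjInv_eq residue_surjective⟩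
  -- distinct residues lift to elements differing by a unit, and `x ∉ J`
  let f : ResidueField R × J → I := fun p =>
    ⟨lift p.1 * x + p.2, add_mem (I.mul_mem_left _ hxI) (hJI.le p.2.2)⟩
  rw [← Nat.card_prod]
  refine Nat.card_le_card_of_injective f ?_
  rintro ⟨a, y⟩ ⟨b, z⟩ hf
  have hval : lift a * x + y = lift b * x + z := congrArg Subtype.val hf
  obtain rfl : a = b := by
    by_contra hab
    have hunit : IsUnit (lift a - lift b) := by
      rw [← notMem_maximalIdeal, ← residue_eq_zero_iff, map_sub, hlift, hlift, sub_eq_zero]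
      exact hab
    refine hxJ ((Ideal.unit_mul_mem_iff_mem _ hunit).mp ?_)
    rw [show (lift a - lift b) * x = z - y by linear_combination hval]
    exact sub_mem z.2 y.2
  exact Prod.ext rfl (Subtype.ext (add_left_cancel hval))

theorem maximalIdeal_pow_succ_lt_pow [IsNoetherianRing R] {i n : ℕ} (hn : 𝔪 ^ n ≠ ⊥)
    (hi : i ≤ n) : 𝔪 ^ (i + 1) < 𝔪 ^ i := by
  refine lt_of_le_of_ne (Ideal.pow_le_pow_right i.le_succ) fun h => hn ?_
  have hbot : 𝔪 ^ i = ⊥ :=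
    Submodule.eq_bot_of_le_smul_of_le_jacobson_bot 𝔪 _ (IsNoetherian.noetherian _)
      (by rw [smul_eq_mul, ← pow_succ', h]) (maximalIdeal_le_jacobson ⊥)
  exact eq_bot_iff.mpr (hbot ▸ Ideal.pow_le_pow_right hi)

theorem card_residueField_pow_mul_card_le [Finite R] {i j : ℕ} (hij : i ≤ j)
    (hlt : ∀ l, i ≤ l → l < j → 𝔪 ^ (l + 1) < 𝔪 ^ l) :
    Nat.card (ResidueField R) ^ (j - i) * Nat.card ↥(𝔪 ^ j) ≤ Nat.card ↥(𝔪 ^ i) := by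
  induction j, hij using Nat.le_induction with
  | base => simp
  | succ j hij ih =>
    calc Nat.card (ResidueField R) ^ (j + 1 - i) * Nat.card ↥(𝔪 ^ (j + 1))
        = Nat.card (ResidueField R) ^ (j - i) *
            (Nat.card (ResidueField R) * Nat.card ↥(𝔪 ^ (j + 1))) := by
          rw [Nat.sub_add_comm hij, pow_succ, mul_assoc]
      _ ≤ Nat.card (ResidueField R) ^ (j - i) * Nat.card ↥(𝔪 ^ j) :=
          Nat.mul_le_mul_left _ (card_residueField_mul_card_le_of_lt (hlt j hij j.lt_succ_self))
      _ ≤ Nat.card ↥(𝔪 ^ i) := ih fun l hil hlj => hlt l hil (by omega)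

theorem card_maximalIdeal_pow [Fintype R] {q n : ℕ} (hcard : Fintype.card R = q ^ n)
    (hres : Nat.card (ResidueField R) = q) (hJ : 𝔪 ^ (n - 1) ≠ ⊥) {i : ℕ} (hi : i ≤ n) :
    Nat.card ↥(𝔪 ^ i) = q ^ (n - i) := by
  have hlt : ∀ l, l < n → 𝔪 ^ (l + 1) < 𝔪 ^ l := fun l hl =>
    maximalIdeal_pow_succ_lt_pow hJ (by omega)
  have hq : 0 < q := hres ▸ Nat.card_pos
  have hupper := card_residueField_pow_mul_card_le (R := R) (Nat.zero_le i)
    fun l _ hl => hlt l (by omega)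
  have hlower := card_residueField_pow_mul_card_le (R := R) hi fun l _ hl => hlt l hl
  rw [hres, pow_zero, Ideal.one_eq_top, Nat.card_congr Submodule.topEquiv.toEquiv,
    Nat.card_eq_fintype_card (α := R), hcard, Nat.sub_zero, ← Nat.add_sub_of_le hi,
    pow_add] at hupper
  rw [hres] at hlower
  refine le_antisymm (Nat.le_of_mul_le_mul_left hupper (pow_pos hq i)) ?_
  exact (Nat.le_mul_of_pos_right _ Nat.card_pos).trans hlower

theorem pow_eq_span_of_mem_radicalLayer [Finite R] {i : ℕ}
    (hcard : Nat.card ↥(𝔪 ^ i) = Nat.card (ResidueField R) * Nat.card ↥(𝔪 ^ (i + 1)))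
    {x : R} (hx : x ∈ radicalLayer R i) : 𝔪 ^ i = Ideal.span {x} := by
  have hxi : Ideal.span {x} ≤ 𝔪 ^ i := (Ideal.span_singleton_le_iff_mem _).mpr hx.1
  have hsup : Ideal.span {x} ⊔ 𝔪 ^ (i + 1) = 𝔪 ^ i := by
    -- otherwise the chain `𝔪^(i+1) < span {x} ⊔ 𝔪^(i+1) < 𝔪^i` has two steps of index `≥ q`
    refine (sup_le hxi (Ideal.pow_le_pow_right i.le_succ)).eq_of_not_lt fun hlt => ?_
    have hgt : 𝔪 ^ (i + 1) < Ideal.span {x} ⊔ 𝔪 ^ (i + 1) :=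
      lt_of_le_of_ne le_sup_right fun h =>
        hx.2 (h ▸ Ideal.mem_sup_left (Ideal.mem_span_singleton_self x))
    have h1 := card_residueField_mul_card_le_of_lt hlt
    have h2 := card_residueField_mul_card_le_of_lt hgt
    have hq : 1 < Nat.card (ResidueField R) := Finite.one_lt_card
    have hpos : 0 < Nat.card ↥(𝔪 ^ (i + 1)) := Nat.card_pos
    nlinarith
  refine le_antisymm ?_ hxi
  refine Submodule.le_of_le_smul_of_le_jacobson_bot (IsNoetherian.noetherian _)
    (maximalIdeal_le_jacobson ⊥) ?_
  rw [smul_eq_mul, ← pow_succ', hsup]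

theorem sq_mem_radicalLayer {m : ℕ} {s : R} (hs : 𝔪 ^ m = Ideal.span {s})
    (hlt : 𝔪 ^ (m + m + 1) < 𝔪 ^ (m + m)) : s ^ 2 ∈ radicalLayer R (m + m) := by
  have hspan : 𝔪 ^ (m + m) = Ideal.span {s ^ 2} := by
    rw [pow_add, hs, Ideal.span_singleton_mul_span_singleton, sq]
  refine ⟨hspan ▸ Ideal.mem_span_singleton_self _, fun hmem => hlt.not_ge ?_⟩
  rw [hspan, Ideal.span_singleton_le_iff_mem]
  exact hmem

theorem ncard_radicalLayer [Finite R] (i : ℕ) :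
    (radicalLayer R i).ncard = Nat.card ↥(𝔪 ^ i) - Nat.card ↥(𝔪 ^ (i + 1)) :=
  Set.ncard_sdiff (Ideal.pow_le_pow_right i.le_succ)

theorem add_mem_radicalLayer {i : ℕ} {t a : R} (ht : t ∈ radicalLayer R i)
    (ha : a ∈ 𝔪 ^ (i + 1)) : t + a ∈ radicalLayer R i :=
  ⟨add_mem ht.1 (Ideal.pow_le_pow_right i.le_succ ha),
    fun h => ht.2 (by simpa using sub_mem h ha)⟩

theorem neg_mem_radicalLayer {i : ℕ} {t : R} (ht : t ∈ radicalLayer R i) :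
    -t ∈ radicalLayer R i :=
  ⟨neg_mem ht.1, fun h => ht.2 (by simpa using neg_mem h)⟩

theorem mem_radicalLayer_and_sq_eq_sq_iff {i : ℕ} {A : Ideal R} (h2 : IsUnit (2 : R))
    (hA : A ≤ 𝔪 ^ (i + 1)) (hann : ∀ y ∈ radicalLayer R i, ∀ b, b * y = 0 ↔ b ∈ A)
    {s : R} (hs : s ∈ radicalLayer R i) (x : R) :
    x ∈ radicalLayer R i ∧ x ^ 2 = s ^ 2 ↔ x - s ∈ A ∨ x + s ∈ A := by
  constructor
  · rintro ⟨hx, hsq⟩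
    have hprod : (x - s) * (x + s) = 0 := by linear_combination hsq
    by_cases hplus : x + s ∈ 𝔪 ^ (i + 1)
    · have hminus : x - s ∈ radicalLayer R i := by
        refine ⟨sub_mem hx.1 hs.1, fun hminus => hs.2 ?_⟩
        refine (Ideal.unit_mul_mem_iff_mem _ h2).mp ?_
        rw [show 2 * s = (x + s) - (x - s) by ring]
        exact sub_mem hplus hminus
      exact Or.inr ((hann _ hminus _).mp (by rw [mul_comm, hprod]))
    · exact Or.inl ((hann _ ⟨add_mem hx.1 hs.1, hplus⟩ _).mp hprod)
  · -- `a` kills both `t` and `t + a`, hence also itself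
    have hshift : ∀ t ∈ radicalLayer R i, ∀ a ∈ A, t + a ∈ radicalLayer R i ∧ (t + a) ^ 2 = t ^ 2 :=
      fun t ht a ha =>
        have hta := add_mem_radicalLayer ht (hA ha)
        ⟨hta, by linear_combination (hann t ht a).mpr ha + (hann _ hta a).mpr ha⟩
    rintro (hminus | hplus)
    · simpa using hshift s hs _ hminus
    · simpa using hshift (-s) (neg_mem_radicalLayer hs) _ hplus

theorem ncard_sq_eq_sq_radicalLayer [Finite R] {i : ℕ} {A : Ideal R} (h2 : IsUnit (2 : R))
    (hA : A ≤ 𝔪 ^ (i + 1)) (hann : ∀ y ∈ radicalLayer R i, ∀ b, b * y = 0 ↔ b ∈ A)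
    {s : R} (hs : s ∈ radicalLayer R i) :
    {x ∈ radicalLayer R i | x ^ 2 = s ^ 2}.ncard = 2 * Nat.card A := by
  have hss : s + s ∉ A := fun h =>
    hs.2 ((Ideal.unit_mul_mem_iff_mem _ h2).mp (by simpa [two_mul] using hA h))
  calc {x ∈ radicalLayer R i | x ^ 2 = s ^ 2}.ncard = {x | x - s ∈ A ∨ x + s ∈ A}.ncard := by
        congr 1
        ext x
        exact mem_radicalLayer_and_sq_eq_sq_iff h2 hA hann hs x
    _ = 2 * Nat.card A := A.toAddSubgroup.ncard_setOf_sub_mem_or_add_mem hss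

theorem maximalIdeal_pow_eq_span [Fintype R] {q n : ℕ} (hcard : Fintype.card R = q ^ n)
    (hres : Nat.card (ResidueField R) = q) (hJ : 𝔪 ^ (n - 1) ≠ ⊥) {m : ℕ} (hm : m < n)
    {y : R} (hy : y ∈ radicalLayer R m) : 𝔪 ^ m = Ideal.span {y} := by
  refine pow_eq_span_of_mem_radicalLayer ?_ hy
  rw [card_maximalIdeal_pow hcard hres hJ hm.le, card_maximalIdeal_pow hcard hres hJ hm, hres,
    ← pow_succ']
  congr 1
  omega

theorem maximalIdeal_pow_eq_bot [Fintype R] {q n : ℕ} (hcard : Fintype.card R = q ^ n)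
    (hres : Nat.card (ResidueField R) = q) (hJ : 𝔪 ^ (n - 1) ≠ ⊥) : 𝔪 ^ n = ⊥ := by
  have h := card_maximalIdeal_pow hcard hres hJ le_rfl
  rw [Nat.sub_self, pow_zero, Nat.card_eq_one_iff_unique] at h
  have := h.1
  exact Submodule.eq_bot_of_subsingleton

theorem mul_eq_zero_iff_mem_pow [Fintype R] {q n : ℕ} (hcard : Fintype.card R = q ^ n)
    (hres : Nat.card (ResidueField R) = q) (hJ : 𝔪 ^ (n - 1) ≠ ⊥) {m : ℕ} (hm : m < n)
    {y : R} (hy : y ∈ radicalLayer R m) (b : R) : b * y = 0 ↔ b ∈ 𝔪 ^ (n - m) := by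
  have hc := fun {i} (hi : i ≤ n) => card_maximalIdeal_pow hcard hres hJ hi
  have hspan := maximalIdeal_pow_eq_span hcard hres hJ hm hy
  refine mul_eq_zero_iff_mem_of_card_mul_card_eq (fun a ha => ?_) ?_ b
  · have hmem : a * y ∈ 𝔪 ^ (n - m) * 𝔪 ^ m := Ideal.mul_mem_mul ha hy.1
    rwa [← pow_add, Nat.sub_add_cancel hm.le, maximalIdeal_pow_eq_bot hcard hres hJ,
      Ideal.mem_bot] at hmem
  · rw [← hspan, hc (Nat.sub_le n m), hc hm.le, ← pow_add, Nat.card_eq_fintype_card, hcard]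
    congr 1
    omega

theorem ncard_image_sq_radicalLayer_mul_two [Fintype R] {q n m : ℕ}
    (hcard : Fintype.card R = q ^ n) (hres : Nat.card (ResidueField R) = q)
    (hJ : 𝔪 ^ (n - 1) ≠ ⊥) (hq : Odd q) (hm : m + m < n) :
    ((· ^ 2) '' radicalLayer R m).ncard * 2 = q ^ (n - (m + m) - 1) * (q - 1) := by
  obtain ⟨e, rfl⟩ : ∃ e, n = m + m + 1 + e := ⟨n - (m + m + 1), by omega⟩
  have h2 : IsUnit (2 : R) := isUnit_two_of_odd_card (hcard ▸ hq.pow)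
  have hc := fun {i} (hi : i ≤ m + m + 1 + e) => card_maximalIdeal_pow hcard hres hJ hi
  have hfiber : ∀ s ∈ radicalLayer R m, {x ∈ radicalLayer R m | x ^ 2 = s ^ 2}.ncard = 2 * q ^ m :=
    fun s hs => by
      rw [ncard_sq_eq_sq_radicalLayer h2 (Ideal.pow_le_pow_right (by omega))
        (fun y hy b => mul_eq_zero_iff_mem_pow hcard hres hJ (by omega) hy b) hs, hc (by omega)]
      congr 2
      omega
  have hcount := Set.ncard_eq_ncard_image_mul (Set.toFinite _) hfiber
  rw [ncard_radicalLayer, hc (by omega), hc (by omega), show m + m + 1 + e - m = e + m + 1 by omega,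
    show m + m + 1 + e - (m + 1) = e + m by omega] at hcount
  rw [show m + m + 1 + e - (m + m) - 1 = e by omega]
  refine Nat.eq_of_mul_eq_mul_right (pow_pos hq.pos m) ?_
  rw [mul_assoc _ 2, ← hcount, pow_succ, pow_add, Nat.mul_sub_one, mul_right_comm, Nat.sub_mul]

end IsLocalRing

theorem card_squares_in_radical_layer {R : Type*} [CommRing R] [Fintype R] [IsLocalRing R]
    (q n k : ℕ) (hq : Odd q) (hke : Even k) (hkn : k < n)
    (hcard : Fintype.card R = q ^ n)
    (hres : Nat.card (R ⧸ (⊥ : Ideal R).jacobson) = q)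
    (hJ : ((⊥ : Ideal R).jacobson) ^ (n - 1) ≠ ⊥) :
    (∀ s : R, s ∈ ((⊥ : Ideal R).jacobson) ^ (k / 2) →
      s ∉ ((⊥ : Ideal R).jacobson) ^ (k / 2 + 1) →
      s ^ 2 ∈ ((⊥ : Ideal R).jacobson) ^ k ∧ s ^ 2 ∉ ((⊥ : Ideal R).jacobson) ^ (k + 1)) ∧
    {u : R | ∃ s : R, s ∈ ((⊥ : Ideal R).jacobson) ^ (k / 2) ∧
      s ∉ ((⊥ : Ideal R).jacobson) ^ (k / 2 + 1) ∧ s ^ 2 = u}.ncard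
      = q ^ (n - k - 1) * (q - 1) / 2 := by
  simp only [jacobson_eq_maximalIdeal ⊥ bot_ne_top] at hres hJ ⊢
  obtain ⟨m, rfl⟩ := hke
  rw [show (m + m) / 2 = m by omega]
  refine ⟨fun s hs hs' => sq_mem_radicalLayer
    (maximalIdeal_pow_eq_span hcard hres hJ (by omega) ⟨hs, hs'⟩)
    (maximalIdeal_pow_succ_lt_pow hJ (by omega)), ?_⟩
  have hsquares : {u : R | ∃ s, s ∈ maximalIdeal R ^ m ∧ s ∉ maximalIdeal R ^ (m + 1) ∧ s ^ 2 = u}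
      = (· ^ 2) '' radicalLayer R m := by
    ext u
    simp [radicalLayer, and_assoc]
  have hcount := ncard_image_sq_radicalLayer_mul_two hcard hres hJ hq hkn
  rw [hsquares]
  omega
end

section
/- Let R be a finite commutative local ring of order q^n with J(R)^2 = 0 and R/J(R) of order q, and let u ∈ J(R) be nonzero. Then the characteristic polynomial of the product matrix A_u(R) equals (-1)^q λ^{q^n - 2q + 2}(λ^2 - q^{n-1})^{q-1}; in particular the nonzero eigenvalues of A_u(R) are ±q^{(n-1)/2}, each with multiplicity q-1. -/
/-!
Write `𝔪` for the maximal ideal and `A` for the product matrix. As `𝔪 ^ 2 = 0` and `u ≠ 0`, in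
every factorisation `x * y = u` exactly one factor is a unit, and `x * y = y * z = z * w = u`
forces `x * w = u`. The equation `y * z = u` has one solution if `y` is a unit and, if solvable,
`|𝔪|` solutions if `y ∈ 𝔪`, since then `y * z = y * z₀ ↔ z - z₀ ∈ 𝔪`. Counting gives
`A ^ 3 = |𝔪| • A`, `tr A = 0` and `tr (A ^ 2) = 2 |Rˣ| = 2 (q - 1) |𝔪|`. Hence the real
symmetric matrix `A` has its eigenvalues in `{0, ±√|𝔪|}`, and the two traces force `√|𝔪|` and
`-√|𝔪|` to occur `q - 1` times each.
-/

open Finset Polynomial IsLocalRing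
open scoped Matrix

@[to_additive]
theorem Finset.prod_comp_eq_prod_pow_card {ι κ M : Type*} [Fintype ι] [DecidableEq κ]
    [CommMonoid M] {g : ι → κ} {t : Finset κ} (h : ∀ i, g i ∈ t) (f : κ → M) :
    ∏ i, f (g i) = ∏ j ∈ t, f j ^ #{i | g i = j} := by
  rw [← prod_fiberwise_of_maps_to' (fun i _ => h i)]
  simp only [prod_const]

theorem IsUnit.card_filter_mul_eq {M : Type*} [Monoid M] [Fintype M] [DecidableEq M] {x : M}
    (hx : IsUnit x) (u : M) : #{y | x * y = u} = 1 := by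
  rw [card_eq_one]
  refine ⟨↑hx.unit⁻¹ * u, ?_⟩
  ext y
  simp only [mem_filter, mem_univ, true_and, mem_singleton]
  constructor
  · rintro rfl
    rw [← mul_assoc, IsUnit.val_inv_mul, one_mul]
  · rintro rfl
    rw [← mul_assoc, IsUnit.mul_val_inv, one_mul]

theorem Polynomial.rootMultiplicity_X_pow_mul_X_sub_C_pow_mul_X_add_C_pow {K : Type*} [CommRing K]
    [IsDomain K] {s : K} (hs : s ≠ -s) (z k : ℕ) :
    rootMultiplicity s (X ^ z * (X - C s) ^ k * (X + C s) ^ k) = k := by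
  have hs0 : s ≠ 0 := by rintro rfl; simp at hs
  have hss : s + s ≠ 0 := fun h => hs (eq_neg_of_add_eq_zero_left h)
  rw [rootMultiplicity_mul (by simp [X_sub_C_ne_zero, X_add_C_ne_zero]),
    rootMultiplicity_mul (by simp [X_sub_C_ne_zero]), rootMultiplicity_X_sub_C_pow,
    rootMultiplicity_eq_zero (by simp [hs0]), rootMultiplicity_eq_zero (by simp [hss]),
    zero_add, add_zero]

theorem Polynomial.rootMultiplicity_neg_X_pow_mul_X_sub_C_pow_mul_X_add_C_pow {K : Type*}
    [CommRing K] [IsDomain K] {s : K} (hs : s ≠ -s) (z k : ℕ) :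
    rootMultiplicity (-s) (X ^ z * (X - C s) ^ k * (X + C s) ^ k) = k := by
  have h := rootMultiplicity_X_pow_mul_X_sub_C_pow_mul_X_add_C_pow (s := -s)
    (by rw [neg_neg]; exact hs.symm) z k
  rwa [map_neg, sub_neg_eq_add, ← sub_eq_add_neg, mul_right_comm] at h

theorem Polynomial.eval_X_pow_mul_X_sub_C_pow_mul_X_add_C_pow {K : Type*} [CommRing K]
    (s t : K) (z k : ℕ) :
    (X ^ z * (X - C s) ^ k * (X + C s) ^ k).eval t = t ^ z * (t ^ 2 - s ^ 2) ^ k := by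
  simp only [eval_mul, eval_pow, eval_X, eval_sub, eval_add, eval_C]
  rw [mul_assoc, ← mul_pow]
  ring

theorem Matrix.det_sub_smul_one {m K : Type*} [Fintype m] [DecidableEq m] [CommRing K]
    (A : Matrix m m K) (t : K) :
    (A - t • 1).det = (-1) ^ Fintype.card m * A.charpoly.eval t := by
  rw [eval_charpoly, ← det_neg, neg_sub, scalar_apply, smul_one_eq_diagonal]

namespace Matrix.IsHermitian

variable {m : Type*} [Fintype m] [DecidableEq m] {A : Matrix m m ℝ}

theorem conjStarAlgAut_star_eigenvectorUnitary_eq_diagonal (hA : A.IsHermitian) :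
    Unitary.conjStarAlgAut ℝ _ (star hA.eigenvectorUnitary) A = diagonal hA.eigenvalues := by
  simpa using hA.conjStarAlgAut_star_eigenvectorUnitary

theorem eigenvalues_pow_three_of_mul_mul_self_eq_smul (hA : A.IsHermitian) {c : ℝ}
    (hcube : A * A * A = c • A) (i : m) : hA.eigenvalues i ^ 3 = c * hA.eigenvalues i := by
  have h := congrArg (Unitary.conjStarAlgAut ℝ _ (star hA.eigenvectorUnitary)) hcube
  rw [map_mul, map_mul, map_smul, conjStarAlgAut_star_eigenvectorUnitary_eq_diagonal] at h
  simpa [pow_succ] using congrFun (congrFun h i) i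

theorem trace_mul_self_eq_sum_eigenvalues_sq (hA : A.IsHermitian) :
    (A * A).trace = ∑ i, hA.eigenvalues i ^ 2 := by
  set U := hA.eigenvectorUnitary
  have h : (Unitary.conjStarAlgAut ℝ _ (star U) (A * A)).trace = (A * A).trace := by
    rw [Unitary.conjStarAlgAut_apply, Unitary.coe_star, star_star, trace_mul_cycle,
      mem_unitaryGroup_iff.mp U.2, Matrix.one_mul]
  rw [← h, map_mul, conjStarAlgAut_star_eigenvectorUnitary_eq_diagonal, diagonal_mul_diagonal,
    trace_diagonal]
  simp only [sq]

theorem eigenvalues_mem_of_mul_mul_self_eq_smul (hA : A.IsHermitian) {c : ℝ} (hc : 0 ≤ c)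
    (hcube : A * A * A = c • A) (i : m) : hA.eigenvalues i ∈ ({0, √c, -√c} : Finset ℝ) := by
  have h : hA.eigenvalues i * ((hA.eigenvalues i - √c) * (hA.eigenvalues i + √c)) = 0 := by
    linear_combination hA.eigenvalues_pow_three_of_mul_mul_self_eq_smul hcube i -
      hA.eigenvalues i * Real.sq_sqrt hc
  simp only [mem_insert, mem_singleton]
  rcases mul_eq_zero.mp h with h | h
  · exact Or.inl h
  rcases mul_eq_zero.mp h with h | h
  · exact Or.inr (Or.inl (sub_eq_zero.mp h))
  · exact Or.inr (Or.inr (eq_neg_of_add_eq_zero_left h))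

theorem charpoly_eq_of_mul_mul_self_eq_smul (hA : A.IsHermitian) {c : ℝ} (hc : 0 < c) {k : ℕ}
    (hcube : A * A * A = c • A) (htr : A.trace = 0) (htr2 : (A * A).trace = 2 * k * c) :
    A.charpoly = X ^ (Fintype.card m - 2 * k) * (X - C √c) ^ k * (X + C √c) ^ k := by
  have hμ := hA.eigenvalues_mem_of_mul_mul_self_eq_smul hc.le hcube
  set μ := hA.eigenvalues
  set s := √c
  have hs : 0 < s := Real.sqrt_pos.mpr hc
  have hs2 : s ^ 2 = c := Real.sq_sqrt hc.le
  have h0s : (0 : ℝ) ∉ ({s, -s} : Finset ℝ) := by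
    simp only [mem_insert, mem_singleton, not_or]; constructor <;> intro h <;> linarith
  have hss : s ∉ ({-s} : Finset ℝ) := by
    simp only [mem_singleton]; intro h; linarith
  have hsum := sum_comp_eq_sum_nsmul_card (M := ℝ) hμ
  have hprod := prod_comp_eq_prod_pow_card (M := ℝ[X]) hμ
  simp only [sum_insert h0s, sum_insert hss, sum_singleton, prod_insert h0s, prod_insert hss,
    prod_singleton] at hsum hprod
  set aZero := #{i | μ i = 0}
  set aPos := #{i | μ i = s}
  set aNeg := #{i | μ i = -s}
  have hcard : Fintype.card m = aZero + (aPos + aNeg) := by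
    have := hsum fun _ => 1
    simp only [sum_const, card_univ, nsmul_eq_mul, mul_one] at this
    exact_mod_cast this
  have hbal : (aPos : ℝ) = aNeg := by
    have := hsum id
    rw [show ∑ i, id (μ i) = 0 by simpa [μ, htr] using hA.trace_eq_sum_eigenvalues.symm] at this
    simp only [id, nsmul_eq_mul] at this
    nlinarith
  have htot : (aPos : ℝ) + aNeg = 2 * k := by
    have := hsum fun t => t ^ 2
    rw [← hA.trace_mul_self_eq_sum_eigenvalues_sq, htr2] at this
    simp only [nsmul_eq_mul, neg_sq, hs2] at this
    nlinarith
  have has : aPos = k := by exact_mod_cast (by linarith : (aPos : ℝ) = k)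
  have has' : aNeg = k := by exact_mod_cast (by linarith : (aNeg : ℝ) = k)
  rw [hA.charpoly_eq]
  simp only [RCLike.ofReal_real_eq_id, id]
  rw [hprod (fun t => X - C t), hcard, has, has', show aZero + (k + k) - 2 * k = aZero by omega]
  simp only [C_0, sub_zero, map_neg, sub_neg_eq_add, mul_assoc]

end Matrix.IsHermitian

namespace IsLocalRing

variable {R : Type*} [CommRing R] [IsLocalRing R]

theorem mul_eq_zero_of_mem_maximalIdeal (h : maximalIdeal R ^ 2 = ⊥) {a b : R}
    (ha : a ∈ maximalIdeal R) (hb : b ∈ maximalIdeal R) : a * b = 0 := by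
  rw [← Ideal.mem_bot, ← h, sq]
  exact Ideal.mul_mem_mul ha hb

theorem mul_eq_zero_iff_mem_maximalIdeal (h : maximalIdeal R ^ 2 = ⊥) {y z : R}
    (hy : y ∈ maximalIdeal R) (hy0 : y ≠ 0) : y * z = 0 ↔ z ∈ maximalIdeal R := by
  refine ⟨fun hyz => ?_, mul_eq_zero_of_mem_maximalIdeal h hy⟩
  by_contra hz
  rw [mem_maximalIdeal, mem_nonunits_iff, not_not] at hz
  exact hy0 ((hz.mul_left_eq_zero).mp hyz)

theorem isUnit_iff_not_isUnit_of_mul_eq (h : maximalIdeal R ^ 2 = ⊥) {u : R}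
    (hu : u ∈ maximalIdeal R) (hu0 : u ≠ 0) {x y : R} (hxy : x * y = u) :
    IsUnit x ↔ ¬IsUnit y := by
  refine ⟨fun hx hy => (mem_maximalIdeal u).mp hu (hxy ▸ hx.mul hy), fun hy => ?_⟩
  by_contra hx
  exact hu0 (hxy ▸ mul_eq_zero_of_mem_maximalIdeal h hx hy)

theorem mul_eq_of_mul_eq_of_mul_eq (h : maximalIdeal R ^ 2 = ⊥) {u : R}
    (hu : u ∈ maximalIdeal R) (hu0 : u ≠ 0) {x y z w : R} (hxy : x * y = u) (hyz : y * z = u)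
    (hzw : z * w = u) : x * w = u := by
  by_cases hy : IsUnit y
  · rwa [hy.mul_left_cancel (by rw [mul_comm, hxy, hyz] : y * x = y * z)]
  have hz : IsUnit z := (isUnit_iff_not_isUnit_of_mul_eq h hu hu0 hyz).not_left.mp hy
  have hw : w ∈ maximalIdeal R := (isUnit_iff_not_isUnit_of_mul_eq h hu hu0 hzw).mp hz
  have hxz : x - z ∈ maximalIdeal R :=
    (mul_eq_zero_iff_mem_maximalIdeal h hy fun hy0 => hu0 (by rw [← hxy, hy0, mul_zero])).mp
      (by rw [mul_sub, mul_comm, hxy, hyz, sub_self])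
  rw [← sub_eq_zero, ← hzw, ← sub_mul, mul_eq_zero_of_mem_maximalIdeal h hxz hw]

theorem one_lt_card_maximalIdeal [Finite R] {u : R} (hu : u ∈ maximalIdeal R) (hu0 : u ≠ 0) :
    1 < Nat.card (maximalIdeal R) :=
  have : Nontrivial (maximalIdeal R) :=
    ⟨⟨⟨u, hu⟩, ⟨0, (maximalIdeal R).zero_mem⟩, fun h => hu0 (congrArg Subtype.val h)⟩⟩
  Finite.one_lt_card

variable [Fintype R] [DecidableEq R]

theorem card_filter_mul_eq_of_mem (h : maximalIdeal R ^ 2 = ⊥) {y z₀ : R}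
    (hy : y ∈ maximalIdeal R) (hy0 : y ≠ 0) :
    #{z | y * z = y * z₀} = Nat.card (maximalIdeal R) := by
  rw [← Fintype.card_subtype, ← Nat.card_eq_fintype_card]
  refine Nat.card_congr ((Equiv.subRight z₀).subtypeEquiv fun z => ?_)
  rw [Equiv.subRight_apply, ← mul_eq_zero_iff_mem_maximalIdeal h hy hy0, mul_sub,
    sub_eq_zero]

theorem sum_card_filter_mul_eq (h : maximalIdeal R ^ 2 = ⊥) {u : R}
    (hu : u ∈ maximalIdeal R) (hu0 : u ≠ 0) {x w : R} (hxw : x * w = u) :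
    ∑ y with x * y = u, #{z | y * z = u} = Nat.card (maximalIdeal R) := by
  by_cases hx : IsUnit x
  · obtain ⟨y, hy⟩ := card_eq_one.mp (hx.card_filter_mul_eq u)
    have hxy : x * y = u := by
      have : y ∈ ({y | x * y = u} : Finset R) := by rw [hy]; exact mem_singleton_self y
      exact (mem_filter.mp this).2
    have hyx : y * x = u := by rw [mul_comm, hxy]
    rw [hy, sum_singleton, ← hyx]
    exact card_filter_mul_eq_of_mem h ((isUnit_iff_not_isUnit_of_mul_eq h hu hu0 hxy).mp hx)
      fun hy0 => hu0 (by rw [← hxy, hy0, mul_zero])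
  · have hunit : ∀ y ∈ ({y | x * y = u} : Finset R), IsUnit y := fun y hy =>
      (isUnit_iff_not_isUnit_of_mul_eq h hu hu0 (mem_filter.mp hy).2).not_left.mp hx
    rw [sum_congr rfl fun y hy => (hunit y hy).card_filter_mul_eq u, sum_const, smul_eq_mul,
      mul_one, ← hxw]
    exact card_filter_mul_eq_of_mem h hx fun hx0 => hu0 (by rw [← hxw, hx0, zero_mul])

theorem sum_card_filter_mul_eq_two_mul (h : maximalIdeal R ^ 2 = ⊥) {u : R}
    (hu : u ∈ maximalIdeal R) (hu0 : u ≠ 0) :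
    ∑ x, #{y | x * y = u} = 2 * #{x : R | IsUnit x} := by
  have hsplit : ∀ x y : R, (if x * y = u then 1 else 0) =
      (if x * y = u ∧ IsUnit x then 1 else 0) + (if y * x = u ∧ IsUnit y then 1 else 0) := by
    intro x y
    by_cases hxy : x * y = u
    · have hiff := isUnit_iff_not_isUnit_of_mul_eq h hu hu0 hxy
      by_cases hx : IsUnit x
      · simp [hxy, hx, hiff.mp hx]
      · simp [hxy, hx, mul_comm y x, hiff.not_left.mp hx]
    · simp [hxy, mul_comm y x]
  have hunits :
      ∑ x : R, ∑ y : R, (if x * y = u ∧ IsUnit x then 1 else 0) = #{x : R | IsUnit x} := by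
    rw [card_filter]
    refine sum_congr rfl fun x _ => ?_
    by_cases hx : IsUnit x
    · simp only [hx, and_true, if_true, ← card_filter]
      exact hx.card_filter_mul_eq u
    · simp [hx]
  rw [← hunits]
  simp only [card_filter, hsplit, sum_add_distrib]
  rw [sum_comm (f := fun x y => if y * x = u ∧ IsUnit y then 1 else 0)]
  ring

theorem card_filter_isUnit :
    #{x : R | IsUnit x} = (Nat.card (R ⧸ maximalIdeal R) - 1) * Nat.card (maximalIdeal R) := by
  have hm : Nat.card (maximalIdeal R) = #{x : R | ¬IsUnit x} := by
    rw [← Fintype.card_subtype, ← Nat.card_eq_fintype_card]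
    exact Nat.card_congr (Equiv.subtypeEquivRight fun x => mem_maximalIdeal x)
  have hR := Submodule.card_eq_card_quotient_mul_card (maximalIdeal R)
  rw [Nat.card_eq_fintype_card, ← card_univ,
    ← card_filter_add_card_filter_not (p := fun x => IsUnit x), ← hm] at hR
  rw [Nat.sub_one_mul, mul_comm, ← hR]
  omega

end IsLocalRing

section ProductMatrix

variable {R : Type*} [CommRing R] [DecidableEq R]

def productMatrix (S : Type*) [Semiring S] (u : R) : Matrix R R S :=
  Matrix.of fun x y => if x * y = u then 1 else 0

variable {S : Type*} [Semiring S]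

theorem productMatrix_apply (u x y : R) :
    productMatrix S u x y = if x * y = u then 1 else 0 := rfl

theorem productMatrix_transpose (u : R) : (productMatrix S u)ᵀ = productMatrix S u := by
  ext x y
  simp only [Matrix.transpose_apply, productMatrix_apply, mul_comm]

theorem isHermitian_productMatrix (u : R) : (productMatrix ℝ u).IsHermitian :=
  Matrix.isHermitian_iff_isSymm.mpr (productMatrix_transpose u)

variable [Fintype R]

theorem productMatrix_mul_self_apply (u x w : R) :
    (productMatrix S u * productMatrix S u) x w = #{y | x * y = u ∧ y * w = u} := by
  simp only [Matrix.mul_apply, productMatrix_apply, ite_zero_mul_ite_zero, mul_one, sum_boole]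

variable [IsLocalRing R]

theorem trace_productMatrix (h : maximalIdeal R ^ 2 = ⊥) {u : R} (hu : u ∈ maximalIdeal R)
    (hu0 : u ≠ 0) : (productMatrix S u).trace = 0 :=
  sum_eq_zero fun _ _ => if_neg fun hxx =>
    iff_not_self (isUnit_iff_not_isUnit_of_mul_eq h hu hu0 hxx)

theorem trace_productMatrix_mul_self (h : maximalIdeal R ^ 2 = ⊥) {u : R}
    (hu : u ∈ maximalIdeal R) (hu0 : u ≠ 0) :
    (productMatrix S u * productMatrix S u).trace =
      2 * (Nat.card (R ⧸ maximalIdeal R) - 1 : ℕ) * Nat.card (maximalIdeal R) := by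
  simp only [Matrix.trace, Matrix.diag, productMatrix_mul_self_apply, mul_comm _ (_ : R),
    and_self]
  rw [← Nat.cast_sum, sum_card_filter_mul_eq_two_mul h hu hu0, card_filter_isUnit, mul_assoc]
  push_cast
  rfl

theorem productMatrix_mul_mul_self (h : maximalIdeal R ^ 2 = ⊥) {u : R}
    (hu : u ∈ maximalIdeal R) (hu0 : u ≠ 0) :
    productMatrix S u * productMatrix S u * productMatrix S u =
      Nat.card (maximalIdeal R) • productMatrix S u := by
  ext x w
  rw [Matrix.mul_assoc, Matrix.mul_apply, Matrix.smul_apply]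
  simp only [productMatrix_mul_self_apply, productMatrix_apply, ite_mul, one_mul, zero_mul]
  rw [← sum_filter]
  split_ifs with hxw
  · rw [nsmul_one, ← sum_card_filter_mul_eq h hu hu0 hxw, Nat.cast_sum]
    refine sum_congr rfl fun y hy => ?_
    have hxy : x * y = u := (mem_filter.mp hy).2
    congr 2
    ext z
    simp only [mem_filter, mem_univ, true_and, and_iff_left_iff_imp]
    intro hyz
    exact mul_eq_of_mul_eq_of_mul_eq h hu hu0 ((mul_comm z y).trans hyz)
      ((mul_comm y x).trans hxy) hxw
  · rw [smul_zero]
    refine sum_eq_zero fun y hy => ?_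
    have hxy : x * y = u := (mem_filter.mp hy).2
    rw [filter_false_of_mem fun z _ hz => hxw (mul_eq_of_mul_eq_of_mul_eq h hu hu0 hxy hz.1 hz.2),
      card_empty, Nat.cast_zero]

theorem charpoly_productMatrix (h : maximalIdeal R ^ 2 = ⊥) {u : R} (hu : u ∈ maximalIdeal R)
    (hu0 : u ≠ 0) :
    (productMatrix ℝ u).charpoly =
      X ^ (Fintype.card R - 2 * (Nat.card (R ⧸ maximalIdeal R) - 1)) *
        (X - C √(Nat.card (maximalIdeal R) : ℝ)) ^ (Nat.card (R ⧸ maximalIdeal R) - 1) *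
        (X + C √(Nat.card (maximalIdeal R) : ℝ)) ^ (Nat.card (R ⧸ maximalIdeal R) - 1) :=
  (isHermitian_productMatrix u).charpoly_eq_of_mul_mul_self_eq_smul
    (Nat.cast_pos.mpr Nat.card_pos)
    (by rw [productMatrix_mul_mul_self h hu hu0, Nat.cast_smul_eq_nsmul])
    (trace_productMatrix h hu hu0) (trace_productMatrix_mul_self h hu hu0)

end ProductMatrix

theorem charpoly_radical_elt_J_sq_zero_general {R : Type*} [CommRing R] [Fintype R] [DecidableEq R]
    [IsLocalRing R] (q n : ℕ)
    (hcard : Fintype.card R = q ^ n)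
    (hres : Nat.card (R ⧸ (⊥ : Ideal R).jacobson) = q)
    (hJ2 : ((⊥ : Ideal R).jacobson) ^ 2 = ⊥)
    (u : R) (hu : u ∈ (⊥ : Ideal R).jacobson) (hu0 : u ≠ 0) :
    let A : Matrix R R ℝ := Matrix.of fun x y => if x * y = u then 1 else 0
    (∀ lam : ℝ, (A - lam • 1).det =
      (-1 : ℝ) ^ q * lam ^ (q ^ n - 2 * q + 2) * (lam ^ 2 - (q : ℝ) ^ (n - 1)) ^ (q - 1)) ∧
    A.charpoly.rootMultiplicity (Real.sqrt ((q : ℝ) ^ (n - 1))) = q - 1 ∧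
    A.charpoly.rootMultiplicity (-Real.sqrt ((q : ℝ) ^ (n - 1))) = q - 1 := by
  intro A
  rw [jacobson_eq_maximalIdeal ⊥ bot_ne_top] at hres hJ2 hu
  have hq : 0 < q := hres ▸ Nat.card_pos
  have hqc : Nat.card (maximalIdeal R) * q = q ^ n := by
    rw [← hcard, ← Nat.card_eq_fintype_card,
      Submodule.card_eq_card_quotient_mul_card (maximalIdeal R), hres]
  have hm := one_lt_card_maximalIdeal hu hu0
  have hn : n ≠ 0 := by
    rintro rfl
    exact hm.ne' (Nat.eq_one_of_mul_eq_one_right (hqc.trans (pow_zero q)))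
  have hc : Nat.card (maximalIdeal R) = q ^ (n - 1) :=
    Nat.eq_of_mul_eq_mul_right hq (by rw [hqc, ← pow_succ, Nat.sub_add_cancel (by omega)])
  have hz : q ^ n - 2 * (q - 1) = q ^ n - 2 * q + 2 := by
    have : 2 * q ≤ q ^ n := by nlinarith
    omega
  have hchar : A.charpoly = X ^ (q ^ n - 2 * q + 2) * (X - C √((q : ℝ) ^ (n - 1))) ^ (q - 1) *
      (X + C √((q : ℝ) ^ (n - 1))) ^ (q - 1) := by
    rw [show A = productMatrix ℝ u from rfl, charpoly_productMatrix hJ2 hu hu0, hcard, hres, hz,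
      hc, Nat.cast_pow]
  have hs : √((q : ℝ) ^ (n - 1)) ≠ -√((q : ℝ) ^ (n - 1)) := by
    have := Real.sqrt_pos.mpr (by positivity : (0 : ℝ) < (q : ℝ) ^ (n - 1))
    linarith
  refine ⟨fun lam => ?_, ?_, ?_⟩
  · rw [Matrix.det_sub_smul_one, hchar, hcard, eval_X_pow_mul_X_sub_C_pow_mul_X_add_C_pow,
      Real.sq_sqrt (by positivity), neg_one_pow_congr (Nat.even_pow' hn), mul_assoc]
  · rw [hchar]
    exact rootMultiplicity_X_pow_mul_X_sub_C_pow_mul_X_add_C_pow hs _ _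
  · rw [hchar]
    exact rootMultiplicity_neg_X_pow_mul_X_sub_C_pow_mul_X_add_C_pow hs _ _

theorem charpoly_radical_elt_J_sq_zero {R : Type*} [CommRing R] [Fintype R] [DecidableEq R]
    [IsLocalRing R] (q n : ℕ) (hn : 0 < n)
    (hcard : Fintype.card R = q ^ n)
    (hres : Nat.card (R ⧸ (⊥ : Ideal R).jacobson) = q)
    (hJ2 : ((⊥ : Ideal R).jacobson) ^ 2 = ⊥)
    (u : R) (hu : u ∈ (⊥ : Ideal R).jacobson) (hu0 : u ≠ 0) :
    let A : Matrix R R ℝ := Matrix.of fun x y => if x * y = u then 1 else 0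
    (∀ lam : ℝ, (A - lam • 1).det =
      (-1 : ℝ) ^ q * lam ^ (q ^ n - 2 * q + 2) * (lam ^ 2 - (q : ℝ) ^ (n - 1)) ^ (q - 1)) ∧
    A.charpoly.rootMultiplicity (Real.sqrt ((q : ℝ) ^ (n - 1))) = q - 1 ∧
    A.charpoly.rootMultiplicity (-Real.sqrt ((q : ℝ) ^ (n - 1))) = q - 1 :=
  charpoly_radical_elt_J_sq_zero_general q n hcard hres hJ2 u hu hu0
end
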